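/- arXiv:2408.06489 — 2 statements merged into one kernel-verified Lean document; each statement's English description precedes it below -/
import Mathlib

section
/- Let N be a DAG. Then N is forest-based if and only if N admits a leaf induced path partition. -/
/-!
Basic notions for finite directed acyclic graphs (DAGs), represented by an
adjacency (arc) relation `A` on a vertex type `V`.
-/

namespace Paper

variable {V : Type*}

/-- A leaf (sink) of the digraph `A`: a vertex of outdegree 0. -/
def IsLeaf (A : V → V → Prop) (v : V) : Prop := ∀ w, ¬ A v w

/-- A root (source) of the digraph `A`: a vertex of indegree 0. -/
def IsRoot (A : V → V → Prop) (v : V) : Prop := ∀ w, ¬ A w v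

/-- The arc relation `A` is acyclic (no directed cycles). -/
def Acyclic (A : V → V → Prop) : Prop := ∀ v, ¬ Relation.TransGen A v v

/-- A directed path in the digraph `A`: a nonempty list of pairwise distinct
vertices, consecutive ones joined by arcs. -/
def IsPath (A : V → V → Prop) (p : List V) : Prop :=
  p ≠ [] ∧ p.Nodup ∧ p.Chain' A

/-- An induced directed path: a directed path such that the only arcs of the
digraph among its vertices are the consecutive arcs of the path. -/
def IsInducedPath (A : V → V → Prop) (p : List V) : Prop :=
  IsPath A p ∧ ∀ i j : Fin p.length, A (p.get i) (p.get j) → (j : ℕ) = (i : ℕ) + 1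

/-- A path partition: a collection of vertex-disjoint directed paths whose
vertex sets partition `V` (every vertex lies in exactly one member). -/
def IsPathPartition (A : V → V → Prop) (P : Set (List V)) : Prop :=
  (∀ p ∈ P, IsPath A p) ∧ ∀ v : V, ∃! p, p ∈ P ∧ v ∈ p

/-- The path `p` ends at a leaf of the digraph `A`. -/
def EndsAtLeaf (A : V → V → Prop) (p : List V) : Prop :=
  ∃ x, p.getLast? = some x ∧ IsLeaf A x

/-- A leaf path partition: a path partition all of whose paths end at a leaf. -/
def IsLeafPP (A : V → V → Prop) (P : Set (List V)) : Prop :=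
  IsPathPartition A P ∧ ∀ p ∈ P, EndsAtLeaf A p

/-- A leaf induced path partition: a leaf path partition all of whose paths are
induced paths. -/
def IsLeafIPP (A : V → V → Prop) (P : Set (List V)) : Prop :=
  IsLeafPP A P ∧ ∀ p ∈ P, IsInducedPath A p

/-- A forest: an acyclic digraph in which every vertex has indegree at most one
(equivalently, every connected component of the underlying undirected graph is
a tree, i.e. is connected, has a single root and no vertex of indegree ≥ 2). -/
def IsForest (F : V → V → Prop) : Prop :=
  Acyclic F ∧ ∀ ⦃u w v⦄, F u v → F w v → u = w

/-- `N = (V, A)` is weakly forest-based: there is a subrelation `F` of `A` that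
is a spanning forest whose leaf set equals the leaf set of `N`. -/
def WeaklyForestBased (A : V → V → Prop) : Prop :=
  ∃ F : V → V → Prop, (∀ ⦃u v⦄, F u v → A u v) ∧ IsForest F ∧
    ∀ v, IsLeaf F v ↔ IsLeaf A v

/-- Reachability in the underlying undirected graph of `F` (i.e. being in the
same connected component of `F`). -/
def UndirReach (F : V → V → Prop) : V → V → Prop :=
  Relation.ReflTransGen fun a b => F a b ∨ F b a

/-- `N = (V, A)` is forest-based: there is a subrelation `F` of `A` that is a
spanning forest whose leaf set equals the leaf set of `N`, such that every arc
of `A` not in `F` has its endpoints in different trees (connected components)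
of `F`. -/
def ForestBased (A : V → V → Prop) : Prop :=
  ∃ F : V → V → Prop, (∀ ⦃u v⦄, F u v → A u v) ∧ IsForest F ∧
    (∀ v, IsLeaf F v ↔ IsLeaf A v) ∧
    ∀ u v, A u v → ¬ F u v → ¬ UndirReach F u v

/-!
Given a forest `F` witnessing that `A` is forest-based, choose for every non-leaf one of its
children in `F`. The resulting successor relation is functional and injective, so its maximal
chains partition the vertices into paths ending at leaves. The vertices of such a path lie in one
tree of `F`, so every arc of `A` between them is an arc of `F`; parents in `F` being unique, it
joins consecutive vertices, and the paths are induced.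

Conversely, given a leaf induced path partition, let `F` consist of the arcs of `A` inside a
single path. Induced paths make these the consecutive arcs, so every vertex has at most one
parent, the trees of `F` are the paths, and the leaves of `F` are the last vertices of the paths.
-/

section Relations

variable {R S : V → V → Prop}

theorem Acyclic.swap (h : Acyclic R) : Acyclic (Function.swap R) :=
  fun v hv => h v (Relation.transGen_swap.mp hv)

theorem Acyclic.mono (h : Acyclic R) (hSR : ∀ ⦃u v⦄, S u v → R u v) : Acyclic S :=
  fun v hv => h v (Relation.TransGen.mono (fun _ _ huv => hSR huv) _ _ hv)

theorem Acyclic.wellFounded [Finite V] (h : Acyclic R) : WellFounded R :=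
  have : IsTrans V (Relation.TransGen R) := ⟨fun _ _ _ => Relation.TransGen.trans⟩
  have : Std.Irrefl (Relation.TransGen R) := ⟨h⟩
  Subrelation.wf Relation.TransGen.single (Finite.wellFounded_of_trans_of_irrefl _)

theorem Acyclic.nodup_of_isChain (h : Acyclic R) {l : List V} (hl : l.IsChain R) : l.Nodup :=
  (List.isChain_iff_pairwise.mp (hl.imp fun _ _ => Relation.TransGen.single)).imp
    fun hab => by rintro rfl; exact h _ hab

theorem _root_.List.IsChain.reflTransGen_get {l : List V} (hl : l.IsChain R) {i j : Fin l.length}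
    (hij : i ≤ j) : Relation.ReflTransGen R (l.get i) (l.get j) := by
  rcases hij.lt_or_eq with hij | rfl
  · exact List.pairwise_iff_get.mp
      (List.isChain_iff_pairwise.mp (hl.imp fun _ _ => Relation.ReflTransGen.single)) i j hij
  · exact .refl

theorem _root_.List.IsChain.get_succ_of_rel (hR : ∀ ⦃u w v⦄, R u v → R w v → u = w) {l : List V}
    (hl : l.IsChain R) (hnd : l.Nodup) {i j : Fin l.length} (hij : i < j)
    (h : R (l.get i) (l.get j)) : (j : ℕ) = i + 1 := by
  obtain ⟨i, hi⟩ := i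
  obtain ⟨j, hj⟩ := j
  simp only [Fin.lt_def, List.get_eq_getElem] at hij h ⊢
  obtain ⟨k, rfl⟩ : ∃ k, j = k + 1 := ⟨j - 1, by omega⟩
  have hk : R l[k] l[k + 1] := List.isChain_iff_getElem.mp hl k hj
  have := (hnd.getElem_inj_iff).mp (hR h hk)
  omega

end Relations

section MaximalChains

variable {S : V → V → Prop}

def IsChainToLeaf (S : V → V → Prop) (v : V) (l : List V) : Prop :=
  (v :: l).IsChain S ∧ EndsAtLeaf S (v :: l)

def IsMaximalChain (S : V → V → Prop) (l : List V) : Prop :=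
  l.IsChain S ∧ (∃ x, l.head? = some x ∧ IsRoot S x) ∧ EndsAtLeaf S l

@[simp]
theorem isChainToLeaf_nil {v : V} : IsChainToLeaf S v [] ↔ IsLeaf S v := by
  simp [IsChainToLeaf, EndsAtLeaf]

@[simp]
theorem isChainToLeaf_cons {v w : V} {l : List V} :
    IsChainToLeaf S v (w :: l) ↔ S v w ∧ IsChainToLeaf S w l := by
  simp only [IsChainToLeaf, EndsAtLeaf, List.isChain_cons_cons, List.getLast?_cons_cons, and_assoc]

theorem exists_isChainToLeaf (hwf : WellFounded (Function.swap S)) (v : V) :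
    ∃ l, IsChainToLeaf S v l := by
  induction v using hwf.induction with
  | _ v ih =>
    by_cases hv : IsLeaf S v
    · exact ⟨[], isChainToLeaf_nil.mpr hv⟩
    · obtain ⟨w, hvw⟩ : ∃ w, S v w := by simpa [IsLeaf] using hv
      obtain ⟨l, hl⟩ := ih w hvw
      exact ⟨w :: l, isChainToLeaf_cons.mpr ⟨hvw, hl⟩⟩

theorem IsChainToLeaf.unique (hS : ∀ ⦃u v w⦄, S u v → S u w → v = w) {v : V}
    {l₁ l₂ : List V} (h₁ : IsChainToLeaf S v l₁) (h₂ : IsChainToLeaf S v l₂) : l₁ = l₂ := by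
  induction l₁ generalizing v l₂ with
  | nil =>
    cases l₂ with
    | nil => rfl
    | cons w _ => exact (isChainToLeaf_nil.mp h₁ w (isChainToLeaf_cons.mp h₂).1).elim
  | cons w t ih =>
    cases l₂ with
    | nil => exact (isChainToLeaf_nil.mp h₂ w (isChainToLeaf_cons.mp h₁).1).elim
    | cons w' t' =>
      obtain ⟨hvw, ht⟩ := isChainToLeaf_cons.mp h₁
      obtain ⟨hvw', ht'⟩ := isChainToLeaf_cons.mp h₂
      obtain rfl := hS hvw hvw'
      rw [ih ht ht']

/-- Read backwards, the part of a maximal chain up to `v` is a chain of `swap S` from `v` to a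
root of `S`. -/
theorem isMaximalChain_append_cons {a b : List V} {v : V} :
    IsMaximalChain S (a ++ v :: b) ↔
      IsChainToLeaf (Function.swap S) v a.reverse ∧ IsChainToLeaf S v b := by
  have hchain : (a ++ [v]).IsChain S ↔ (v :: a.reverse).IsChain (Function.swap S) := by
    simpa using List.isChain_reverse (R := S) (l := v :: a.reverse)
  have hhead : (a ++ v :: b).head? = (v :: a.reverse).getLast? := by
    rw [← List.reverse_concat', List.getLast?_reverse]
    cases a <;> simp
  have hlast : (a ++ v :: b).getLast? = (v :: b).getLast? :=
    List.getLast?_append_of_ne_nil _ (List.cons_ne_nil v b)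
  simp only [IsMaximalChain, IsChainToLeaf, EndsAtLeaf, List.isChain_split, hchain, hhead, hlast]
  exact ⟨fun ⟨⟨h₁, h₂⟩, h₃, h₄⟩ => ⟨⟨h₁, h₃⟩, h₂, h₄⟩, fun ⟨⟨h₁, h₃⟩, h₂, h₄⟩ => ⟨⟨h₁, h₂⟩, h₃, h₄⟩⟩

theorem existsUnique_isMaximalChain_mem [Finite V] (hS : Acyclic S)
    (hfun : ∀ ⦃u v w⦄, S u v → S u w → v = w) (hinj : ∀ ⦃u w v⦄, S u v → S w v → u = w)
    (v : V) : ∃! l, IsMaximalChain S l ∧ v ∈ l := by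
  obtain ⟨m, hm⟩ := exists_isChainToLeaf (S := Function.swap S) (by simpa using hS.wellFounded) v
  obtain ⟨l, hl⟩ := exists_isChainToLeaf hS.swap.wellFounded v
  refine ⟨m.reverse ++ v :: l,
    ⟨isMaximalChain_append_cons.mpr ⟨by simpa using hm, hl⟩, by simp⟩, ?_⟩
  rintro q ⟨hq, hvq⟩
  obtain ⟨a, b, rfl⟩ := List.append_of_mem hvq
  obtain ⟨ha, hb⟩ := isMaximalChain_append_cons.mp hq
  have hm' : a.reverse = m :=
    IsChainToLeaf.unique (S := Function.swap S) (fun _ _ _ h h' => hinj h h') ha hm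
  rw [hb.unique hfun hl, ← hm', List.reverse_reverse]

end MaximalChains

section ForestToPaths

variable {A F S : V → V → Prop}

theorem IsMaximalChain.isPath (hA : Acyclic A) (hSA : ∀ ⦃u v⦄, S u v → A u v) {l : List V}
    (hl : IsMaximalChain S l) : IsPath A l := by
  obtain ⟨hchain, ⟨x, hx, -⟩, -⟩ := hl
  have hchainA : l.IsChain A := hchain.imp hSA
  exact ⟨List.ne_nil_of_mem (List.mem_of_mem_head? hx), hA.nodup_of_isChain hchainA, hchainA⟩

theorem IsForest.isInducedPath (hF : IsForest F)
    (hcross : ∀ u v, A u v → ¬ F u v → ¬ UndirReach F u v) (hA : Acyclic A) {l : List V}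
    (hlF : l.IsChain F) (hl : IsPath A l) : IsInducedPath A l := by
  refine ⟨hl, fun i j hij => ?_⟩
  rcases lt_or_ge i j with hlt | hle
  · have hFij : F (l.get i) (l.get j) := by
      by_contra hn
      exact hcross _ _ hij hn
        (Relation.ReflTransGen.mono (fun _ _ => Or.inl) _ _ (hlF.reflTransGen_get hlt.le))
    exact hlF.get_succ_of_rel hF.2 hl.2.1 hlt hFij
  · exact (hA _ (Relation.TransGen.head' hij (hl.2.2.reflTransGen_get hle))).elim

theorem ForestBased.exists_isLeafIPP [Finite V] (hA : Acyclic A) (h : ForestBased A) :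
    ∃ P : Set (List V), IsLeafIPP A P := by
  obtain ⟨F, hFA, hF, hleaf, hcross⟩ := h
  have hchild : ∀ v, ¬ IsLeaf F v → ∃ w, F v w := fun v hv => by simpa [IsLeaf] using hv
  choose! f hf using hchild
  set S : V → V → Prop := fun u v => F u v ∧ v = f u
  have hSF : ∀ ⦃u v⦄, S u v → F u v := fun _ _ h => h.1
  have hSA : ∀ ⦃u v⦄, S u v → A u v := fun _ _ h => hFA h.1
  have hSleaf (v : V) : IsLeaf S v ↔ IsLeaf A v := by
    rw [← hleaf v]
    exact ⟨fun h w hw => h (f v) ⟨hf v fun hl => hl w hw, rfl⟩, fun h w hw => h w hw.1⟩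
  have hSfun : ∀ ⦃u v w⦄, S u v → S u w → v = w := fun _ _ _ hv hw => hv.2.trans hw.2.symm
  have hSinj : ∀ ⦃u w v⦄, S u v → S w v → u = w := fun _ _ _ hu hw => hF.2 hu.1 hw.1
  refine ⟨{l | IsMaximalChain S l}, ⟨⟨fun l hl => hl.isPath hA hSA,
    existsUnique_isMaximalChain_mem (hA.mono hSA) hSfun hSinj⟩, ?_⟩, ?_⟩
  · rintro l ⟨-, -, x, hx, hxleaf⟩
    exact ⟨x, hx, (hSleaf x).mp hxleaf⟩
  · exact fun l hl => hF.isInducedPath hcross hA (hl.1.imp hSF) (hl.isPath hA hSA)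

end ForestToPaths

section PathsToForest

variable {A : V → V → Prop}

theorem IsInducedPath.eq_of_rel_of_rel {p : List V} (hp : IsInducedPath A p) {u w v : V}
    (hu : u ∈ p) (hw : w ∈ p) (hv : v ∈ p) (huv : A u v) (hwv : A w v) : u = w := by
  obtain ⟨i, rfl⟩ := List.mem_iff_get.mp hu
  obtain ⟨i', rfl⟩ := List.mem_iff_get.mp hw
  obtain ⟨j, rfl⟩ := List.mem_iff_get.mp hv
  have h₁ := hp.2 i j huv
  have h₂ := hp.2 i' j hwv
  rw [Fin.ext (by omega : (i : ℕ) = i')]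

theorem exists_mem_rel_of_endsAtLeaf {l : List V} (hl : l.IsChain A) (he : EndsAtLeaf A l)
    {v : V} (hv : v ∈ l) (hnv : ¬ IsLeaf A v) : ∃ w ∈ l, A v w := by
  induction l with
  | nil => simp at hv
  | cons x t ih =>
    cases t with
    | nil =>
      obtain ⟨y, hy, hyleaf⟩ := he
      obtain rfl : v = x := List.mem_singleton.mp hv
      obtain rfl : v = y := by simpa using hy
      exact (hnv hyleaf).elim
    | cons y t =>
      obtain ⟨hxy, ht⟩ := List.isChain_cons_cons.mp hl
      rcases List.mem_cons.mp hv with rfl | hv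
      · exact ⟨y, by simp, hxy⟩
      · obtain ⟨w, hw, hvw⟩ := ih ht (by simpa [EndsAtLeaf] using he) hv
        exact ⟨w, List.mem_cons_of_mem _ hw, hvw⟩

theorem IsLeafIPP.forestBased {P : Set (List V)} (hA : Acyclic A) (hP : IsLeafIPP A P) :
    ForestBased A := by
  obtain ⟨⟨⟨hpath, hpart⟩, hend⟩, hind⟩ := hP
  set F : V → V → Prop := fun u v => A u v ∧ ∃ p ∈ P, u ∈ p ∧ v ∈ p
  have hblock {u v : V} {p : List V} (h : UndirReach F u v) (hp : p ∈ P) (hu : u ∈ p) :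
      v ∈ p := by
    induction h with
    | refl => exact hu
    | tail _ hbc ih =>
      obtain ⟨-, q, hq, hb, hc⟩ | ⟨-, q, hq, hc, hb⟩ := hbc <;>
      · rwa [(hpart _).unique ⟨hp, ih⟩ ⟨hq, hb⟩]
  refine ⟨F, fun _ _ h => h.1, ⟨hA.mono fun _ _ h => h.1, ?_⟩,
    fun v => ⟨?_, fun h w hw => h w hw.1⟩, ?_⟩
  · rintro u w v ⟨huv, p, hp, hu, hv⟩ ⟨hwv, q, hq, hw, hv'⟩
    obtain rfl := (hpart v).unique ⟨hp, hv⟩ ⟨hq, hv'⟩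
    exact (hind p hp).eq_of_rel_of_rel hu hw hv huv hwv
  · intro hFv w hvw
    obtain ⟨p, hp, hv⟩ := (hpart v).exists
    obtain ⟨w', hw', hvw'⟩ :=
      exists_mem_rel_of_endsAtLeaf (hpath p hp).2.2 (hend p hp) hv fun h => h w hvw
    exact hFv w' ⟨hvw', p, hp, hv, hw'⟩
  · intro u v huv hnF hreach
    obtain ⟨p, hp, hu⟩ := (hpart u).exists
    exact hnF ⟨huv, p, hp, hu, hblock hreach hp hu⟩

end PathsToForest

/-- Let `N` be a (finite) DAG. Then `N` is forest-based if and
only if `N` admits a leaf induced path partition. -/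
theorem forestBased_iff_leafInducedPathPartition
    {V : Type*} [Fintype V] (A : V → V → Prop) (hacy : Acyclic A) :
    ForestBased A ↔ ∃ P : Set (List V), IsLeafIPP A P :=
  ⟨ForestBased.exists_isLeafIPP hacy, fun ⟨_, hP⟩ => hP.forestBased hacy⟩

end Paper
end

section
/- Let N be a DAG with two distinct roots r_1 and r_2, and let N' be the DAG obtained from N by adding a new vertex r together with the two arcs (r, r_1) and (r, r_2). Then N admits a leaf induced path partition if and only if N' admits a leaf induced path partition. -/
/-!
Basic notions for finite directed acyclic graphs (DAGs), represented by an
adjacency (arc) relation `A` on a vertex type `V`.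
-/

namespace Paper

variable {V : Type*}

/-!
In a path partition, a root can only be the first vertex of its path. Hence the new root can be
prepended to the path of `N` starting at `r₁`: it sends no other arc into that path, since its
other out-neighbour is a root as well. Conversely, the path of `N'` through the new root starts
there, so deleting the new root from its path leaves a leaf induced path partition of `N`.
-/

theorem _root_.List.map_some_reduceOption {q : List (Option V)} (h : none ∉ q) :
    q.reduceOption.map some = q := by
  induction q with
  | nil => rfl
  | cons a q ih =>
    cases a with
    | none => exact absurd List.mem_cons_self h
    | some v => simpa using ih (mt (List.mem_cons_of_mem _) h)

section Paths

variable {A : V → V → Prop}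

theorem isPath_iff {p : List V} : IsPath A p ↔ p ≠ [] ∧ p.Nodup ∧ p.IsChain A := Iff.rfl

theorem IsRoot.notMem_of_isChain_cons {x : V} (hx : IsRoot A x) :
    ∀ {a : V} {l : List V}, (a :: l).IsChain A → x ∉ l
  | _, [], _ => List.not_mem_nil
  | a, b :: l, hc => by
    rw [List.isChain_cons_cons] at hc
    rintro (_ | ⟨_, hxl⟩)
    · exact hx a hc.1
    · exact hx.notMem_of_isChain_cons hc.2 hxl

theorem IsPath.eq_cons_of_isRoot {p : List V} {x : V} (hp : IsPath A p) (hxp : x ∈ p)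
    (hx : IsRoot A x) : ∃ t, p = x :: t := by
  obtain ⟨a, t, rfl⟩ := List.exists_cons_of_ne_nil hp.1
  rcases List.mem_cons.1 hxp with rfl | hxt
  · exact ⟨t, rfl⟩
  · exact absurd hxt (hx.notMem_of_isChain_cons hp.2.2)

theorem isPath_cons_cons {a b : V} {t : List V} :
    IsPath A (a :: b :: t) ↔ IsPath A (b :: t) ∧ a ∉ b :: t ∧ A a b := by
  simp only [isPath_iff, List.nodup_cons (a := a), List.isChain_cons_cons]
  grind

theorem forall_arc_get_cons {a : V} {l : List V} :
    (∀ i j : Fin (a :: l).length, A ((a :: l).get i) ((a :: l).get j) → (j : ℕ) = i + 1) ↔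
      ¬ A a a ∧ (∀ j : Fin l.length, A a (l.get j) → (j : ℕ) = 0) ∧ (∀ x ∈ l, ¬ A x a) ∧
        ∀ i j : Fin l.length, A (l.get i) (l.get j) → (j : ℕ) = i + 1 := by
  simp only [List.length_cons, List.get_eq_getElem, Fin.forall_fin_succ, Fin.coe_ofNat_eq_mod,
    Nat.zero_mod, List.getElem_cons_zero, Nat.right_eq_add, Nat.add_eq_zero_iff,
    Fin.val_eq_zero_iff, one_ne_zero, and_false, imp_false, Fin.val_succ, List.getElem_cons_succ,
    Nat.add_right_cancel_iff, forall_and, List.forall_mem_iff_get]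
  tauto

theorem isInducedPath_cons_cons {a b : V} {t : List V} :
    IsInducedPath A (a :: b :: t) ↔ IsInducedPath A (b :: t) ∧ a ∉ b :: t ∧ A a b ∧
      ¬ A a a ∧ (∀ x ∈ t, ¬ A a x) ∧ ∀ x ∈ b :: t, ¬ A x a := by
  have hnext : (∀ j : Fin (b :: t).length, A a ((b :: t).get j) → (j : ℕ) = 0) ↔
      ∀ x ∈ t, ¬ A a x := by
    simp [Fin.forall_fin_succ, List.forall_mem_iff_get]
  rw [IsInducedPath, IsInducedPath, isPath_cons_cons, forall_arc_get_cons, hnext]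
  tauto

theorem endsAtLeaf_cons_cons {a b : V} {t : List V} :
    EndsAtLeaf A (a :: b :: t) ↔ EndsAtLeaf A (b :: t) := by
  simp only [EndsAtLeaf, List.getLast?_cons_cons]

end Paths

section Map

open Function

variable {W : Type*} {B : W → W → Prop} {f : V → W} {s : List V}

theorem isPath_map_iff (hf : f.Injective) : IsPath B (s.map f) ↔ IsPath (B on f) s := by
  simp only [isPath_iff, ne_eq, List.map_eq_nil_iff, List.nodup_map_iff hf, List.isChain_map]

theorem isInducedPath_map_iff (hf : f.Injective) :
    IsInducedPath B (s.map f) ↔ IsInducedPath (B on f) s := by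
  rw [IsInducedPath, IsInducedPath, isPath_map_iff hf]
  simp only [Fin.forall_iff, List.get_eq_getElem, List.getElem_map, List.length_map]

theorem endsAtLeaf_map_iff {A : V → V → Prop} (hleaf : ∀ x, IsLeaf B (f x) ↔ IsLeaf A x) :
    EndsAtLeaf B (s.map f) ↔ EndsAtLeaf A s := by
  simp [EndsAtLeaf, List.getLast?_map, hleaf]

end Map

section Partition

variable {W : Type*} {A : V → V → Prop} {P : Set (List V)}

theorem isLeafIPP_iff : IsLeafIPP A P ↔
    (∀ p ∈ P, IsInducedPath A p ∧ EndsAtLeaf A p) ∧ ∀ v, ∃! p, p ∈ P ∧ v ∈ p := by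
  simp only [IsLeafIPP, IsLeafPP, IsPathPartition, IsInducedPath]
  grind

theorem existsUnique_mem_image (hP : ∀ v, ∃! p, p ∈ P ∧ v ∈ p) {g : List V → List W}
    {e : W → V} (hg : ∀ s ∈ P, ∀ w, w ∈ g s ↔ e w ∈ s) (w : W) :
    ∃! q, q ∈ g '' P ∧ w ∈ q := by
  obtain ⟨s, ⟨hsP, hs⟩, huniq⟩ := hP (e w)
  refine ⟨g s, ⟨Set.mem_image_of_mem g hsP, (hg s hsP w).2 hs⟩, ?_⟩
  rintro _ ⟨⟨s', hs'P, rfl⟩, hw⟩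
  rw [huniq s' ⟨hs'P, (hg s' hs'P w).1 hw⟩]

theorem IsLeafIPP.image {B : W → W → Prop} (hP : IsLeafIPP A P) (g : List V → List W)
    (e : W → V) (hg : ∀ s ∈ P, ∀ w, w ∈ g s ↔ e w ∈ s)
    (hpath : ∀ s ∈ P, g s ≠ [] → IsInducedPath B (g s) ∧ EndsAtLeaf B (g s)) :
    IsLeafIPP B (g '' P \ {[]}) := by
  refine isLeafIPP_iff.2 ⟨?_, fun w => ?_⟩
  · rintro _ ⟨⟨s, hs, rfl⟩, hne⟩
    exact hpath s hs hne
  · obtain ⟨q, ⟨hq, hwq⟩, huniq⟩ := existsUnique_mem_image (isLeafIPP_iff.1 hP).2 hg w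
    exact ⟨q, ⟨⟨hq, List.ne_nil_of_mem hwq⟩, hwq⟩, fun q' h => huniq q' ⟨h.1.1, h.2⟩⟩

end Partition

section AddRoot

variable {A : V → V → Prop} {S : V → Prop}

def addRoot (A : V → V → Prop) (S : V → Prop) : Option V → Option V → Prop
  | some u, some w => A u w
  | none, some w => S w
  | _, none => False

theorem isRoot_addRoot_none : IsRoot (addRoot A S) none := by
  rintro (_ | _) <;> exact id

theorem isLeaf_addRoot_some {x : V} : IsLeaf (addRoot A S) (some x) ↔ IsLeaf A x := by
  simp [IsLeaf, Option.forall, addRoot]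

theorem isInducedPath_map_some_addRoot {s : List V} :
    IsInducedPath (addRoot A S) (s.map some) ↔ IsInducedPath A s :=
  isInducedPath_map_iff (Option.some_injective V)

theorem endsAtLeaf_map_some_addRoot {s : List V} :
    EndsAtLeaf (addRoot A S) (s.map some) ↔ EndsAtLeaf A s :=
  endsAtLeaf_map_iff fun _ => isLeaf_addRoot_some

theorem eq_map_some_or_eq_none_cons {q : List (Option V)} (hq : IsPath (addRoot A S) q) :
    q = q.reduceOption.map some ∨ q = none :: q.reduceOption.map some := by
  by_cases hnone : none ∈ q
  · obtain ⟨t, rfl⟩ := hq.eq_cons_of_isRoot hnone isRoot_addRoot_none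
    have ht : none ∉ t := isRoot_addRoot_none.notMem_of_isChain_cons hq.2.2
    simp [List.map_some_reduceOption ht]
  · exact Or.inl (List.map_some_reduceOption hnone).symm

theorem IsInducedPath.reduceOption_of_addRoot {q : List (Option V)}
    (hq : IsInducedPath (addRoot A S) q) (hl : EndsAtLeaf (addRoot A S) q)
    (hne : q.reduceOption ≠ []) :
    IsInducedPath A q.reduceOption ∧ EndsAtLeaf A q.reduceOption := by
  rw [← isInducedPath_map_some_addRoot (S := S), ← endsAtLeaf_map_some_addRoot (S := S)]
  obtain ⟨b, t, hbt⟩ := List.exists_cons_of_ne_nil hne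
  rcases eq_map_some_or_eq_none_cons hq.1 with h | h <;> rw [h, hbt] at hq hl <;> rw [hbt]
  · exact ⟨hq, hl⟩
  · exact ⟨(isInducedPath_cons_cons.1 hq).1, endsAtLeaf_cons_cons.1 hl⟩

section LiftPath

variable [DecidableEq V]

def liftPath (r : V) (s : List V) : List (Option V) :=
  if r ∈ s then none :: s.map some else s.map some

theorem mem_liftPath {r : V} {s : List V} {w : Option V} : w ∈ liftPath r s ↔ w.getD r ∈ s := by
  cases w <;> by_cases hr : r ∈ s <;> simp [liftPath, hr]

theorem IsInducedPath.liftPath_addRoot (hS : ∀ v, S v → IsRoot A v) {r : V} (hr : S r)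
    {s : List V} (hs : IsInducedPath A s) (hl : EndsAtLeaf A s) :
    IsInducedPath (addRoot A S) (liftPath r s) ∧ EndsAtLeaf (addRoot A S) (liftPath r s) := by
  by_cases hrs : r ∈ s
  · obtain ⟨t, rfl⟩ := hs.1.eq_cons_of_isRoot hrs (hS r hr)
    have hSt : ∀ x ∈ t.map some, ¬ addRoot A S none x := by
      simp only [List.mem_map]
      rintro _ ⟨y, hyt, rfl⟩ hy
      exact (hS y hy).notMem_of_isChain_cons hs.1.2.2 hyt
    rw [liftPath, if_pos hrs, List.map_cons, isInducedPath_cons_cons, endsAtLeaf_cons_cons,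
      ← List.map_cons, isInducedPath_map_some_addRoot, endsAtLeaf_map_some_addRoot]
    exact ⟨⟨hs, by simp, hr, id, hSt, fun x _ => isRoot_addRoot_none x⟩, hl⟩
  · rw [liftPath, if_neg hrs, isInducedPath_map_some_addRoot, endsAtLeaf_map_some_addRoot]
    exact ⟨hs, hl⟩

end LiftPath

theorem exists_isLeafIPP_addRoot_iff (hS : ∀ v, S v → IsRoot A v) {r : V} (hr : S r) :
    (∃ P : Set (List V), IsLeafIPP A P) ↔
      ∃ P : Set (List (Option V)), IsLeafIPP (addRoot A S) P := by
  classical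
  constructor
  · rintro ⟨P, hP⟩
    refine ⟨_, hP.image (liftPath r) (·.getD r) (fun _ _ _ => mem_liftPath) fun s hs _ => ?_⟩
    obtain ⟨hind, hleaf⟩ := (isLeafIPP_iff.1 hP).1 s hs
    exact hind.liftPath_addRoot hS hr hleaf
  · rintro ⟨P, hP⟩
    refine ⟨_, hP.image List.reduceOption some (fun _ _ _ => List.reduceOption_mem_iff)
      fun q hq hne => ?_⟩
    obtain ⟨hind, hleaf⟩ := (isLeafIPP_iff.1 hP).1 q hq
    exact hind.reduceOption_of_addRoot hleaf hne

end AddRoot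

theorem leafIPP_iff_addRoot_general
    {V : Type*} (A : V → V → Prop)
    (r₁ r₂ : V) (h₁ : IsRoot A r₁) (h₂ : IsRoot A r₂) :
    (∃ P : Set (List V), IsLeafIPP A P) ↔
      ∃ P : Set (List (Option V)),
        IsLeafIPP (fun a b : Option V =>
          (∃ u w : V, a = some u ∧ b = some w ∧ A u w) ∨
            (a = none ∧ (b = some r₁ ∨ b = some r₂))) P := by
  have hN' : (fun a b : Option V =>
      (∃ u w : V, a = some u ∧ b = some w ∧ A u w) ∨ (a = none ∧ (b = some r₁ ∨ b = some r₂))) =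
      addRoot A (fun v => v = r₁ ∨ v = r₂) := by
    funext a b
    cases a <;> cases b <;> simp [addRoot]
  rw [hN']
  exact exists_isLeafIPP_addRoot_iff (by rintro v (rfl | rfl) <;> assumption) (Or.inl rfl)

/-- Let `N` be a (finite) DAG with two distinct roots `r₁` and
`r₂`, and let `N'` be the DAG obtained from `N` by adding a new vertex `r`
together with the two arcs `(r, r₁)` and `(r, r₂)`.  (Here `N'` lives on
`Option V`, the new vertex `r` being `none`.)  Then `N` admits a leaf induced
path partition if and only if `N'` does. -/
theorem leafIPP_iff_addRoot
    {V : Type*} [Fintype V] (A : V → V → Prop) (hacy : Acyclic A)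
    (r₁ r₂ : V) (hne : r₁ ≠ r₂) (h₁ : IsRoot A r₁) (h₂ : IsRoot A r₂) :
    (∃ P : Set (List V), IsLeafIPP A P) ↔
      ∃ P : Set (List (Option V)),
        IsLeafIPP (fun a b : Option V =>
          (∃ u w : V, a = some u ∧ b = some w ∧ A u w) ∨
            (a = none ∧ (b = some r₁ ∨ b = some r₂))) P :=
  leafIPP_iff_addRoot_general A r₁ r₂ h₁ h₂

end Paper
end
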